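/- Let N ≥ 0 be an integer and ε > −1/2 a real number. Then for every fixed real α, all complex roots of the one-variable polynomial y ↦ P_N^{(N,ε)}(α, y) are real, and for every fixed real β, all complex roots of the one-variable polynomial x ↦ P_N^{(N,ε)}(x, β) are real. -/
import Mathlib
open Polynomial Finset


/-- The constraint polynomials `P_k^{(N,ε)}(x,y)` with `x` fixed, as one-variable real
polynomials in `y`, defined by the three-term recurrence. -/
noncomputable def constraintPolyY (N : ℕ) (ε x : ℝ) : ℕ → Polynomial ℝ
  | 0 => 1
  | 1 => X + C (x - 1 - 2 * ε)
  | k + 2 =>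
      (X + C ((((k : ℝ) + 2) * x) - ((k : ℝ) + 2) * (((k : ℝ) + 2) + 2 * ε))) *
          constraintPolyY N ε x (k + 1) -
        C (((k : ℝ) + 2) * ((k : ℝ) + 1) * ((N : ℝ) - ((k : ℝ) + 1)) * x) *
          constraintPolyY N ε x k

/-- The constraint polynomials `P_k^{(N,ε)}(x,y)` with `y` fixed, as one-variable real
polynomials in `x`, defined by the three-term recurrence. -/
noncomputable def constraintPolyX (N : ℕ) (ε y : ℝ) : ℕ → Polynomial ℝ
  | 0 => 1
  | 1 => X + C (y - 1 - 2 * ε)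
  | k + 2 =>
      (C ((k : ℝ) + 2) * X + C (y - ((k : ℝ) + 2) * (((k : ℝ) + 2) + 2 * ε))) *
          constraintPolyX N ε y (k + 1) -
        C (((k : ℝ) + 2) * ((k : ℝ) + 1) * ((N : ℝ) - ((k : ℝ) + 1))) * X *
          constraintPolyX N ε y k

namespace CPaux

def cc (N k : ℕ) : ℝ := (k : ℝ) * ((k : ℝ) - 1) * ((N : ℝ) - (k : ℝ) + 1)
def aa (N : ℕ) (ε : ℝ) (m : ℕ) : ℝ := (m : ℝ) * (2 * (N:ℝ) + 1 + 2 * ε - 2 * (m:ℝ))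
def bb (N : ℕ) (ε : ℝ) (m : ℕ) : ℝ :=
  (m:ℝ) * ((m:ℝ) + 1) * ((N:ℝ) - (m:ℝ)) * ((N:ℝ) - (m:ℝ) + 2*ε)
noncomputable def WW (N m k : ℕ) : ℝ :=
  if 1 ≤ k ∧ k ≤ m ∧ m ≤ N then
    (-1)^(m-k) * ((m.factorial : ℝ) * ((m-1).factorial : ℝ) * ((N-k).factorial : ℝ)) /
      (((N-m).factorial : ℝ) * (k.factorial : ℝ) * ((k-1).factorial : ℝ) * ((m-k).factorial : ℝ))
  else 0
lemma WW_of_neg {N m k : ℕ} (h : ¬(1 ≤ k ∧ k ≤ m ∧ m ≤ N)) : WW N m k = 0 := if_neg h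
lemma WW_self {N m : ℕ} (h1 : 1 ≤ m) (h2 : m ≤ N) : WW N m m = 1 := by
  rw [WW, if_pos ⟨h1, le_refl m, h2⟩]
  simp only [Nat.sub_self, pow_zero, Nat.factorial_zero, Nat.cast_one, mul_one, one_mul]
  rw [div_eq_one_iff_eq]
  · ring
  · positivity

/-- (C2): `c_{k+1} W_{m,k+1} = (k-m) W_{m,k}` -/
lemma WW_succ_right {N m k : ℕ} (hm1 : 1 ≤ m) (hmN : m ≤ N) (hk : 1 ≤ k) :
    cc N (k+1) * WW N m (k+1) = ((k:ℝ) - (m:ℝ)) * WW N m k := by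
  rcases lt_or_ge k m with hkm | hkm
  · -- main case k < m
    obtain ⟨k', rfl⟩ : ∃ k', k = k' + 1 := ⟨k - 1, by omega⟩
    obtain ⟨d, rfl⟩ : ∃ d, m = k' + 2 + d := ⟨m - (k' + 2), by omega⟩
    obtain ⟨e, rfl⟩ : ∃ e, N = k' + 2 + d + e := ⟨N - (k'+2+d), by omega⟩
    rw [WW, if_pos (by omega), WW, if_pos (by omega)]
    simp only [show k' + 2 + d - (k' + 1 + 1) = d from by omega,
      show k' + 2 + d - (k' + 1) = d + 1 from by omega,
      show k' + 2 + d + e - (k' + 1 + 1) = d + e from by omega,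
      show k' + 2 + d + e - (k' + 1) = d + e + 1 from by omega,
      show k' + 2 + d + e - (k' + 2 + d) = e from by omega,
      show k' + 2 + d - 1 = k' + 1 + d from by omega,
      show k' + 1 + 1 - 1 = k' + 1 from by omega,
      show k' + 1 - 1 = k' from by omega]
    rw [cc]
    rw [show (d + e + 1).factorial = (d+e+1) * (d+e).factorial from Nat.factorial_succ _,
        show (d + 1).factorial = (d+1) * d.factorial from Nat.factorial_succ _,
        show (k' + 1 + 1).factorial = (k'+2) * (k'+1).factorial from Nat.factorial_succ _,
        show (k' + 1).factorial = (k'+1) * k'.factorial from Nat.factorial_succ _,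
        pow_succ]
    push_cast
    field_simp
    ring
  · -- degenerate: k ≥ m
    have h1 : WW N m (k+1) = 0 := WW_of_neg (by omega)
    rcases eq_or_lt_of_le hkm with rfl | hlt
    · rw [h1]; ring
    · rw [h1, WW_of_neg (N := N) (m := m) (k := k) (by omega)]; ring


/-- (L_a): `(m-k+1) W_{m,k-1} = -(N-k+1)k(k-1) W_{m,k}` -/
lemma WW_pred_right {N m k : ℕ} (hm1 : 1 ≤ m) (hmN : m ≤ N) (hk : 1 ≤ k) :
    ((m:ℝ) - (k:ℝ) + 1) * WW N m (k-1) = -(((N:ℝ)-(k:ℝ)+1) * (k:ℝ) * ((k:ℝ)-1)) * WW N m k := by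
  rcases Nat.lt_or_ge k 2 with hk2 | hk2
  · -- k = 1
    have : k = 1 := by omega
    subst this
    rw [WW_of_neg (N := N) (m := m) (k := 0) (by omega)]
    push_cast; ring
  rcases Nat.lt_or_ge m k with hlt | hge
  · -- k ≥ m+1
    rcases eq_or_lt_of_le (show m + 1 ≤ k from hlt) with heq | hlt2
    · -- k = m+1 : LHS coeff 0, RHS WW m k = 0
      rw [WW_of_neg (N := N) (m := m) (k := k) (by omega)]
      rw [show ((m:ℝ) - (k:ℝ) + 1) = 0 from by rw [← heq]; push_cast; ring]
      ring
    · rw [WW_of_neg (N := N) (m := m) (k := k) (by omega),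
          WW_of_neg (N := N) (m := m) (k := k-1) (by omega)]
      ring
  · -- main case 2 ≤ k ≤ m
    obtain ⟨k', rfl⟩ : ∃ k', k = k' + 2 := ⟨k - 2, by omega⟩
    obtain ⟨d, rfl⟩ : ∃ d, m = k' + 2 + d := ⟨m - (k' + 2), by omega⟩
    obtain ⟨e, rfl⟩ : ∃ e, N = k' + 2 + d + e := ⟨N - (k'+2+d), by omega⟩
    rw [WW, if_pos (by omega), WW, if_pos (by omega)]
    simp only [show k' + 2 - 1 = k' + 1 from by omega,
      show k' + 2 + d - (k' + 1) = d + 1 from by omega,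
      show k' + 2 + d - (k' + 2) = d from by omega,
      show k' + 2 + d + e - (k' + 1) = d + e + 1 from by omega,
      show k' + 2 + d + e - (k' + 2) = d + e from by omega,
      show k' + 2 + d + e - (k' + 2 + d) = e from by omega,
      show k' + 2 + d - 1 = k' + 1 + d from by omega,
      show k' + 1 - 1 = k' from by omega]
    rw [show (d + e + 1).factorial = (d+e+1) * (d+e).factorial from Nat.factorial_succ _,
        show (d + 1).factorial = (d+1) * d.factorial from Nat.factorial_succ _,
        show (k' + 2).factorial = (k'+2) * (k'+1).factorial from Nat.factorial_succ _,
        show (k' + 1).factorial = (k'+1) * k'.factorial from Nat.factorial_succ _,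
        pow_succ]
    push_cast
    field_simp
    ring

/-- (R2'): `(m+1-k) W_{m+1,k} = -(m+1)m(N-m) W_{m,k}` -/
lemma WW_succ_left {N m k : ℕ} (hm1 : 1 ≤ m) (hmN : m ≤ N) (hk : 1 ≤ k) :
    ((m:ℝ) + 1 - (k:ℝ)) * WW N (m+1) k = -(((m:ℝ)+1) * (m:ℝ) * ((N:ℝ)-(m:ℝ))) * WW N m k := by
  rcases Nat.lt_or_ge m k with hlt | hge
  · rcases eq_or_lt_of_le (show m + 1 ≤ k from hlt) with heq | hlt2
    · -- k = m+1
      rw [WW_of_neg (N := N) (m := m) (k := k) (by omega),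
          show ((m:ℝ) + 1 - (k:ℝ)) = 0 from by rw [← heq]; push_cast; ring]
      ring
    · rw [WW_of_neg (N := N) (m := m) (k := k) (by omega),
          WW_of_neg (N := N) (m := m+1) (k := k) (by omega)]
      ring
  · rcases Nat.lt_or_ge m N with hmN2 | hmN2
    · -- main case: k ≤ m, m+1 ≤ N
      obtain ⟨d, rfl⟩ : ∃ d, m = k + d := ⟨m - k, by omega⟩
      obtain ⟨e, rfl⟩ : ∃ e, N = k + d + 1 + e := ⟨N - (k+d+1), by omega⟩
      obtain ⟨k', rfl⟩ : ∃ k', k = k' + 1 := ⟨k - 1, by omega⟩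
      rw [WW, if_pos (by omega), WW, if_pos (by omega)]
      simp only [show k' + 1 + d + 1 - (k' + 1) = d + 1 from by omega,
        show k' + 1 + d - (k' + 1) = d from by omega,
        show k' + 1 + d + 1 + e - (k' + 1) = d + 1 + e from by omega,
        show k' + 1 + d + 1 + e - (k' + 1 + d + 1) = e from by omega,
        show k' + 1 + d + 1 + e - (k' + 1 + d) = e + 1 from by omega,
        show k' + 1 + d + 1 - 1 = k' + 1 + d from by omega,
        show k' + 1 + d - 1 = k' + d from by omega,
        show k' + 1 - 1 = k' from by omega]
      rw [show (d + 1).factorial = (d+1) * d.factorial from Nat.factorial_succ _,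
          show (e + 1).factorial = (e+1) * e.factorial from Nat.factorial_succ _,
          show (k' + 1 + d + 1).factorial = (k'+1+d+1) * (k'+1+d).factorial from Nat.factorial_succ _,
          show (k' + 1 + d).factorial = (k'+1+d) * (k'+d).factorial from by
            rw [show k' + 1 + d = (k'+d) + 1 from by omega, Nat.factorial_succ],
          pow_succ]
      push_cast
      field_simp
      ring
    · -- m = N : RHS coeff 0, WW N (N+1) k = 0
      have : m = N := by omega
      subst this
      rw [WW_of_neg (N := m) (m := m+1) (k := k) (by omega)]
      have : ((m:ℝ) - (m:ℝ)) = 0 := by ring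
      rw [show -(((m:ℝ)+1) * (m:ℝ) * ((m:ℝ)-(m:ℝ))) = 0 from by ring]
      ring

/-- (R3'): `m(m-1)(N-m+1) W_{m-1,k} = -(m-k) W_{m,k}` -/
lemma WW_pred_left {N m k : ℕ} (hm1 : 1 ≤ m) (hmN : m ≤ N) (hk : 1 ≤ k) :
    ((m:ℝ) * ((m:ℝ)-1) * ((N:ℝ)-(m:ℝ)+1)) * WW N (m-1) k = -((m:ℝ) - (k:ℝ)) * WW N m k := by
  rcases Nat.lt_or_ge m 2 with hm2 | hm2
  · -- m = 1
    have : m = 1 := by omega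
    subst this
    rcases Nat.lt_or_ge k 2 with hk2 | hk2
    · have : k = 1 := by omega
      subst this
      have h0 : -((1:ℝ) - ((1:ℕ):ℝ)) = 0 := by push_cast; ring
      push_cast
      ring
    · rw [WW_of_neg (N := N) (m := 1) (k := k) (by omega),
          WW_of_neg (N := N) (m := 0) (k := k) (by omega)]
      ring
  rcases Nat.lt_or_ge k m with hlt | hge
  · -- main case k ≤ m-1, m ≥ 2
    obtain ⟨k', rfl⟩ : ∃ k', k = k' + 1 := ⟨k - 1, by omega⟩
    obtain ⟨d, rfl⟩ : ∃ d, m = k' + 2 + d := ⟨m - (k' + 2), by omega⟩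
    obtain ⟨e, rfl⟩ : ∃ e, N = k' + 2 + d + e := ⟨N - (k'+2+d), by omega⟩
    rw [WW, if_pos (by omega), WW, if_pos (by omega)]
    simp only [show k' + 2 + d - 1 = k' + 1 + d from by omega,
      show k' + 1 + d - (k' + 1) = d from by omega,
      show k' + 2 + d - (k' + 1) = d + 1 from by omega,
      show k' + 2 + d + e - (k' + 1) = d + e + 1 from by omega,
      show k' + 2 + d + e - (k' + 2 + d) = e from by omega,
      show k' + 2 + d + e - (k' + 1 + d) = e + 1 from by omega,
      show k' + 1 + d - 1 = k' + d from by omega,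
      show k' + 1 - 1 = k' from by omega]
    rw [show (d + 1).factorial = (d+1) * d.factorial from Nat.factorial_succ _,
        show (e + 1).factorial = (e+1) * e.factorial from Nat.factorial_succ _,
        show (k' + 2 + d).factorial = (k'+2+d) * (k'+1+d).factorial from by
          rw [show k' + 2 + d = (k'+1+d) + 1 from by omega, Nat.factorial_succ],
        show (k' + 1 + d).factorial = (k'+1+d) * (k'+d).factorial from by
          rw [show k' + 1 + d = (k'+d) + 1 from by omega, Nat.factorial_succ],
        pow_succ]
    push_cast
    field_simp
    ring
  · -- k ≥ m
    rcases eq_or_lt_of_le hge with rfl | hlt2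
    · rw [WW_of_neg (N := N) (m := m-1) (k := m) (by omega),
          show -((m:ℝ) - (m:ℝ)) = 0 from by ring]
      ring
    · rw [WW_of_neg (N := N) (m := m) (k := k) (by omega),
          WW_of_neg (N := N) (m := m-1) (k := k) (by omega)]
      ring


/-- The main entrywise identity `W A = A' W`. -/
lemma WW_C1 {N m k : ℕ} (ε : ℝ) (hm1 : 1 ≤ m) (hmN : m ≤ N) (hk : 1 ≤ k) (hkN : k ≤ N) :
    (k:ℝ) * ((k:ℝ) + 2*ε) * WW N m k + WW N m (k-1)
      = aa N ε m * WW N m k + WW N (m+1) k + bb N ε (m-1) * WW N (m-1) k := by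
  have hc : ((m-1 : ℕ) : ℝ) = (m:ℝ) - 1 := by
    rw [Nat.cast_sub hm1, Nat.cast_one]
  rcases Nat.lt_or_ge m k with hlt | hge
  · rcases eq_or_lt_of_le (show m + 1 ≤ k from hlt) with heq | hlt2
    · -- k = m + 1
      subst heq
      rw [WW_of_neg (N := N) (m := m) (k := m+1) (by omega),
          show m + 1 - 1 = m from by omega, WW_self hm1 hmN,
          WW_self (by omega) (by omega),
          WW_of_neg (N := N) (m := m-1) (k := m+1) (by omega)]
      ring
    · rw [WW_of_neg (N := N) (m := m) (k := k) (by omega),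
          WW_of_neg (N := N) (m := m) (k := k-1) (by omega),
          WW_of_neg (N := N) (m := m+1) (k := k) (by omega),
          WW_of_neg (N := N) (m := m-1) (k := k) (by omega)]
      ring
  · -- k ≤ m : multiply by (m-k+1) ≠ 0
    have h1 := WW_pred_right (N := N) (m := m) (k := k) hm1 hmN hk
    have h2 := WW_succ_left (N := N) (m := m) (k := k) hm1 hmN hk
    have h3 := WW_pred_left (N := N) (m := m) (k := k) hm1 hmN hk
    have hkm : (k:ℝ) ≤ (m:ℝ) := by exact_mod_cast hge
    have hcne : ((m:ℝ) - (k:ℝ) + 1) ≠ 0 := by linarith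
    rw [← mul_right_inj' hcne]
    rw [aa, bb, hc]
    linear_combination h1 - h2 - (((m:ℝ) - (k:ℝ) + 1) * ((N:ℝ) - (m:ℝ) + 1 + 2*ε)) * h3


/-- shift helper -/
lemma sum_shift (n : ℕ) (g : ℕ → ℂ) :
    ∑ i ∈ Finset.range n, g (i+1) = (∑ i ∈ Finset.range n, g i) + g n - g 0 := by
  have h1 := Finset.sum_range_succ g n
  have h2 := Finset.sum_range_succ' g n
  rw [h2] at h1
  linear_combination h1

/-- the transformed vector -/
noncomputable def wseq (N : ℕ) (u : ℕ → ℂ) (m : ℕ) : ℂ :=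
  ∑ i ∈ Finset.range N, (WW N m (i+1) : ℂ) * u (i+1)

lemma wseq_zero (N : ℕ) (u : ℕ → ℂ) : wseq N u 0 = 0 := by
  rw [wseq]
  refine Finset.sum_eq_zero fun i _ => ?_
  rw [WW_of_neg (by omega)]
  simp

lemma wseq_top (N : ℕ) (u : ℕ → ℂ) : wseq N u (N+1) = 0 := by
  rw [wseq]
  refine Finset.sum_eq_zero fun i _ => ?_
  rw [WW_of_neg (by omega)]
  simp

lemma wseq_one (N : ℕ) (hN : 1 ≤ N) (u : ℕ → ℂ) : wseq N u 1 = u 1 := by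
  rw [wseq]
  rw [Finset.sum_eq_single 0]
  · rw [show WW N 1 1 = 1 from WW_self le_rfl hN]; simp
  · intro i _ hi
    rw [WW_of_neg (by omega)]
    simp
  · intro h
    exact absurd (Finset.mem_range.mpr (by omega)) h

/-- Sum lemma for the `A`-part. -/
lemma sum_A (N : ℕ) (ε : ℝ) (u : ℕ → ℂ) (m : ℕ) (hm1 : 1 ≤ m) (hmN : m ≤ N)
    (huN : u (N+1) = 0) :
    ∑ i ∈ Finset.range N, (WW N m (i+1) : ℂ) *
        ((((i+1:ℕ):ℝ) * (((i+1:ℕ):ℝ) + 2*ε) : ℝ) * u (i+1) + u (i+2))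
      = ((aa N ε m : ℝ) : ℂ) * wseq N u m + wseq N u (m+1)
          + ((bb N ε (m-1) : ℝ) : ℂ) * wseq N u (m-1) := by
  have hshift : ∑ i ∈ Finset.range N, (WW N m (i+1) : ℂ) * u (i+2)
      = ∑ i ∈ Finset.range N, (WW N m i : ℂ) * u (i+1) := by
    have := sum_shift N (fun i => (WW N m i : ℂ) * u (i+1))
    rw [this, huN, WW_of_neg (N := N) (m := m) (k := 0) (by omega)]
    push_cast
    ring
  calc ∑ i ∈ Finset.range N, (WW N m (i+1) : ℂ) *
        ((((i+1:ℕ):ℝ) * (((i+1:ℕ):ℝ) + 2*ε) : ℝ) * u (i+1) + u (i+2))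
      = (∑ i ∈ Finset.range N, ((((i+1:ℕ):ℝ) * (((i+1:ℕ):ℝ) + 2*ε)) * WW N m (i+1) : ℝ) * u (i+1))
        + ∑ i ∈ Finset.range N, (WW N m (i+1) : ℂ) * u (i+2) := by
        rw [← Finset.sum_add_distrib]
        refine Finset.sum_congr rfl fun i _ => ?_
        push_cast
        ring
    _ = ∑ i ∈ Finset.range N,
          ((((i+1:ℕ):ℝ) * (((i+1:ℕ):ℝ) + 2*ε) * WW N m (i+1) + WW N m i : ℝ) : ℂ) * u (i+1) := by
        rw [hshift, ← Finset.sum_add_distrib]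
        refine Finset.sum_congr rfl fun i _ => ?_
        push_cast
        ring
    _ = ∑ i ∈ Finset.range N,
          ((aa N ε m * WW N m (i+1) + WW N (m+1) (i+1) + bb N ε (m-1) * WW N (m-1) (i+1) : ℝ) : ℂ)
            * u (i+1) := by
        refine Finset.sum_congr rfl fun i hi => ?_
        have hiN : i + 1 ≤ N := Finset.mem_range.mp hi
        have := WW_C1 (N := N) (m := m) (k := i+1) ε hm1 hmN (by omega) hiN
        rw [show i + 1 - 1 = i from rfl] at this
        rw [this]
    _ = ((aa N ε m : ℝ) : ℂ) * wseq N u m + wseq N u (m+1)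
          + ((bb N ε (m-1) : ℝ) : ℂ) * wseq N u (m-1) := by
        simp only [wseq, Finset.mul_sum, ← Finset.sum_add_distrib]
        refine Finset.sum_congr rfl fun i _ => ?_
        push_cast
        ring

/-- Sum lemma for the `K`-part. -/
lemma sum_K (N : ℕ) (u : ℕ → ℂ) (m : ℕ) (hm1 : 1 ≤ m) (hmN : m ≤ N) (hu0 : u 0 = 0) :
    ∑ i ∈ Finset.range N, (WW N m (i+1) : ℂ) *
        ((((i+1:ℕ):ℝ) : ℂ) * u (i+1) - ((cc N (i+1) : ℝ) : ℂ) * u i)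
      = ((m:ℝ) : ℂ) * wseq N u m := by
  have hshift : ∑ i ∈ Finset.range N, ((WW N m (i+1) * cc N (i+1) : ℝ) : ℂ) * u i
      = ∑ i ∈ Finset.range N, ((WW N m (i+2) * cc N (i+2) : ℝ) : ℂ) * u (i+1) := by
    have this2 : ∑ i ∈ Finset.range N, ((WW N m (i+2) * cc N (i+2) : ℝ) : ℂ) * u (i+1)
        = (∑ i ∈ Finset.range N, ((WW N m (i+1) * cc N (i+1) : ℝ) : ℂ) * u i)
          + ((WW N m (N+1) * cc N (N+1) : ℝ) : ℂ) * u N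
          - ((WW N m (0+1) * cc N (0+1) : ℝ) : ℂ) * u 0 :=
      sum_shift N (fun i => ((WW N m (i+1) * cc N (i+1) : ℝ) : ℂ) * u i)
    rw [this2, hu0, WW_of_neg (N := N) (m := m) (k := N+1) (by omega)]
    push_cast
    ring
  calc ∑ i ∈ Finset.range N, (WW N m (i+1) : ℂ) *
        ((((i+1:ℕ):ℝ) : ℂ) * u (i+1) - ((cc N (i+1) : ℝ) : ℂ) * u i)
      = (∑ i ∈ Finset.range N, ((((i+1:ℕ):ℝ) * WW N m (i+1) : ℝ) : ℂ) * u (i+1))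
        - ∑ i ∈ Finset.range N, ((WW N m (i+1) * cc N (i+1) : ℝ) : ℂ) * u i := by
        rw [← Finset.sum_sub_distrib]
        refine Finset.sum_congr rfl fun i _ => ?_
        push_cast
        ring
    _ = ∑ i ∈ Finset.range N,
          ((((i+1:ℕ):ℝ) * WW N m (i+1) - cc N (i+2) * WW N m (i+2) : ℝ) : ℂ) * u (i+1) := by
        rw [hshift, ← Finset.sum_sub_distrib]
        refine Finset.sum_congr rfl fun i _ => ?_
        push_cast
        ring
    _ = ∑ i ∈ Finset.range N, (((m:ℝ) * WW N m (i+1) : ℝ) : ℂ) * u (i+1) := by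
        refine Finset.sum_congr rfl fun i hi => ?_
        have h := WW_succ_right (N := N) (m := m) (k := i+1) hm1 hmN (by omega)
        have : ((i+1:ℕ):ℝ) * WW N m (i+1) - cc N (i+2) * WW N m (i+2)
            = (m:ℝ) * WW N m (i+1) := by
          rw [show i + 1 + 1 = i + 2 from rfl] at h
          push_cast at h ⊢
          linarith
        rw [this]
    _ = ((m:ℝ) : ℂ) * wseq N u m := by
        rw [wseq, Finset.mul_sum]
        refine Finset.sum_congr rfl fun i _ => ?_
        push_cast
        ring


/-- Key lemma: a nonzero solution of the symmetric tridiagonal eigen-recurrence with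
positive off-diagonal products forces a real spectral parameter. -/
lemma key_real (n : ℕ) (ε : ℝ) (hε : (-1:ℝ)/2 < ε) (z : ℂ) (w : ℕ → ℂ)
    (D t : ℕ → ℝ) (hD1 : D 1 = 1) (hDnn : ∀ m, 0 ≤ D m)
    (hw0 : w 0 = 0) (hw1 : w 1 = 1) (hwtop : w (n+2) = 0)
    (hrel : ∀ m, 1 ≤ m → m ≤ n+1 →
      z * (D m : ℂ) * w m = ((aa (n+1) ε m - t m : ℝ) : ℂ) * w m + w (m+1)
        + ((bb (n+1) ε (m-1) : ℝ) : ℂ) * w (m-1)) :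
    z.im = 0 := by
  set N := n + 1 with hN
  -- positivity of bb
  have hbpos : ∀ j, 1 ≤ j → j ≤ n → 0 < bb N ε j := by
    intro j hj1 hjn
    rw [bb]
    have hj : (j:ℝ) ≤ (n:ℝ) := by exact_mod_cast hjn
    have hj0 : (1:ℝ) ≤ (j:ℝ) := by exact_mod_cast hj1
    have hN : ((N:ℕ):ℝ) = (n:ℝ) + 1 := by push_cast [hN]; ring
    rw [hN]
    have h1 : (0:ℝ) < (j:ℝ) := by linarith
    have h2 : (0:ℝ) < (j:ℝ) + 1 := by linarith
    have h3 : (0:ℝ) < (n:ℝ) + 1 - (j:ℝ) := by linarith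
    have h4 : (0:ℝ) < (n:ℝ) + 1 - (j:ℝ) + 2*ε := by linarith
    positivity
  -- gamma
  set γ : ℕ → ℝ := fun m => ∏ j ∈ Finset.Ico 1 m, (bb N ε j)⁻¹ with hγ
  have hγpos : ∀ m, m ≤ n + 1 → 0 < γ m := by
    intro m hm
    refine Finset.prod_pos fun j hj => ?_
    rw [Finset.mem_Ico] at hj
    exact inv_pos.mpr (hbpos j hj.1 (by omega))
  have hγ1 : γ 1 = 1 := by rw [hγ]; simp
  have hγs : ∀ m, 1 ≤ m → m ≤ n → γ (m+1) * bb N ε m = γ m := by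
    intro m hm1 hmn
    have hne := (hbpos m hm1 hmn).ne'
    have : γ (m+1) = γ m * (bb N ε m)⁻¹ := by
      simp only [hγ]
      exact Finset.prod_Ico_succ_top (by omega) _
    rw [this, mul_assoc, inv_mul_cancel₀ hne, mul_one]
  -- sum the relations against γ conj w
  have hsum : ∑ i ∈ Finset.range N, ((γ (i+1) : ℝ) : ℂ) * (starRingEnd ℂ) (w (i+1)) *
        (z * (D (i+1) : ℂ) * w (i+1))
      = ∑ i ∈ Finset.range N, ((γ (i+1) : ℝ) : ℂ) * (starRingEnd ℂ) (w (i+1)) *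
        (((aa N ε (i+1) - t (i+1) : ℝ) : ℂ) * w (i+1) + w (i+2)
          + ((bb N ε i : ℝ) : ℂ) * w i) := by
    refine Finset.sum_congr rfl fun i hi => ?_
    have := hrel (i+1) (by omega) (by rw [Finset.mem_range] at hi; omega)
    rw [show i + 1 - 1 = i from rfl] at this
    rw [this]
  -- LHS is z * T with T real positive
  set T : ℝ := ∑ i ∈ Finset.range N, γ (i+1) * D (i+1) * Complex.normSq (w (i+1)) with hT
  have hL : ∑ i ∈ Finset.range N, ((γ (i+1) : ℝ) : ℂ) * (starRingEnd ℂ) (w (i+1)) *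
        (z * (D (i+1) : ℂ) * w (i+1)) = z * (T : ℂ) := by
    rw [hT]
    push_cast
    rw [Finset.mul_sum]
    refine Finset.sum_congr rfl fun i _ => ?_
    rw [← Complex.mul_conj]
    ring
  have hTpos : 0 < T := by
    have h0 : γ 1 * D 1 * Complex.normSq (w 1) = 1 := by
      rw [hγ1, hD1, hw1]; simp
    have : (1:ℝ) ≤ T := by
      rw [← h0, hT]
      refine Finset.single_le_sum (f := fun i => γ (i+1) * D (i+1) * Complex.normSq (w (i+1)))
        (fun i hi => ?_) (Finset.mem_range.mpr (show 0 < N from by omega))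
    -- nonneg of terms
      have := hγpos (i+1) (by rw [Finset.mem_range] at hi; omega)
      have := hDnn (i+1)
      have := Complex.normSq_nonneg (w (i+1))
      positivity
    linarith
  -- RHS has zero imaginary part
  have hR : (∑ i ∈ Finset.range N, ((γ (i+1) : ℝ) : ℂ) * (starRingEnd ℂ) (w (i+1)) *
        (((aa N ε (i+1) - t (i+1) : ℝ) : ℂ) * w (i+1) + w (i+2)
          + ((bb N ε i : ℝ) : ℂ) * w i)).im = 0 := by
    have hsplit : ∀ i : ℕ, ((γ (i+1) : ℝ) : ℂ) * (starRingEnd ℂ) (w (i+1)) *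
        (((aa N ε (i+1) - t (i+1) : ℝ) : ℂ) * w (i+1) + w (i+2)
          + ((bb N ε i : ℝ) : ℂ) * w i)
        = ((γ (i+1) * (aa N ε (i+1) - t (i+1)) : ℝ) : ℂ) * ((starRingEnd ℂ) (w (i+1)) * w (i+1))
          + ((γ (i+1) : ℝ) : ℂ) * ((starRingEnd ℂ) (w (i+1)) * w (i+2))
          + ((γ (i+1) * bb N ε i : ℝ) : ℂ) * ((starRingEnd ℂ) (w (i+1)) * w i) := by
      intro i; push_cast; ring
    simp only [hsplit]
    rw [Finset.sum_add_distrib, Finset.sum_add_distrib]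
    simp only [Complex.add_im]
    -- first sum: real * normSq
    have e1 : (∑ i ∈ Finset.range N,
        ((γ (i+1) * (aa N ε (i+1) - t (i+1)) : ℝ) : ℂ) * ((starRingEnd ℂ) (w (i+1)) * w (i+1))).im
        = 0 := by
      rw [Complex.im_sum]
      refine Finset.sum_eq_zero fun i _ => ?_
      rw [← Complex.normSq_eq_conj_mul_self]
      simp [Complex.mul_im]
    -- third sum: shift and pair with second
    have e3 : ∑ i ∈ Finset.range N,
        ((γ (i+1) * bb N ε i : ℝ) : ℂ) * ((starRingEnd ℂ) (w (i+1)) * w i)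
        = ∑ i ∈ Finset.range n, ((γ (i+1) : ℝ) : ℂ) * ((starRingEnd ℂ) (w (i+2)) * w (i+1)) := by
      rw [hN, Finset.sum_range_succ' (fun i => ((γ (i+1) * bb N ε i : ℝ) : ℂ)
        * ((starRingEnd ℂ) (w (i+1)) * w i)) n]
      rw [hw0]
      simp only [mul_zero, add_zero]
      refine Finset.sum_congr rfl fun i hi => ?_
      rw [Finset.mem_range] at hi
      have h := hγs (i+1) (by omega) (by omega)
      rw [show γ (i+1+1) * bb N ε (i+1) = γ (i+1) from h]
    have e2 : ∑ i ∈ Finset.range N,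
        ((γ (i+1) : ℝ) : ℂ) * ((starRingEnd ℂ) (w (i+1)) * w (i+2))
        = ∑ i ∈ Finset.range n, ((γ (i+1) : ℝ) : ℂ) * ((starRingEnd ℂ) (w (i+1)) * w (i+2)) := by
      rw [hN, Finset.sum_range_succ]
      rw [hwtop]
      simp
    rw [e1, e2, e3, zero_add, ← Complex.add_im, ← Finset.sum_add_distrib]
    have : ∀ i ∈ Finset.range n, ((γ (i+1) : ℝ) : ℂ) * ((starRingEnd ℂ) (w (i+1)) * w (i+2))
        + ((γ (i+1) : ℝ) : ℂ) * ((starRingEnd ℂ) (w (i+2)) * w (i+1))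
        = ((γ (i+1) : ℝ) : ℂ) * (2 * ((starRingEnd ℂ) (w (i+1)) * w (i+2)).re) := by
      intro i _
      have hconj : (starRingEnd ℂ) (w (i+2)) * w (i+1)
          = (starRingEnd ℂ) ((starRingEnd ℂ) (w (i+1)) * w (i+2)) := by
        rw [map_mul, Complex.conj_conj]
        ring
      rw [hconj, ← mul_add, Complex.add_conj]
      push_cast
      ring
    rw [Finset.sum_congr rfl this, Complex.im_sum]
    refine (Finset.sum_eq_zero fun i _ => ?_)
    rw [show ((γ (i+1) : ℝ) : ℂ) * (2 * ((starRingEnd ℂ) (w (i+1)) * w (i+2)).re : ℂ)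
        = ((γ (i+1) * (2 * ((starRingEnd ℂ) (w (i+1)) * w (i+2)).re) : ℝ) : ℂ) from by push_cast; ring]
    exact Complex.ofReal_im _
  -- conclude
  rw [hL] at hsum
  have : (z * (T : ℂ)).im = 0 := by rw [hsum]; exact hR
  rw [Complex.mul_im] at this
  simp only [Complex.ofReal_im, Complex.ofReal_re, mul_zero, zero_add] at this
  rcases mul_eq_zero.mp this with h | h
  · exact h
  · exact absurd h (ne_of_gt hTpos)


noncomputable def uY (N : ℕ) (ε α : ℝ) (z : ℂ) : ℕ → ℂ :=
  fun j => if j = 0 then 0 else (Polynomial.aeval z) (constraintPolyY N ε α (j-1))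

noncomputable def uX (N : ℕ) (ε β : ℝ) (z : ℂ) : ℕ → ℂ :=
  fun j => if j = 0 then 0 else (Polynomial.aeval z) (constraintPolyX N ε β (j-1))

lemma uY_rel (N : ℕ) (ε α : ℝ) (z : ℂ) (k : ℕ) :
    z * uY N ε α z (k+1)
      = ((((k+1:ℕ):ℝ) * (((k+1:ℕ):ℝ) + 2*ε) : ℝ) : ℂ) * uY N ε α z (k+1) + uY N ε α z (k+2)
        - (α : ℂ) * ((((k+1:ℕ):ℝ) : ℂ) * uY N ε α z (k+1)
            - ((cc N (k+1) : ℝ) : ℂ) * uY N ε α z k) := by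
  rcases k with _ | k'
  · simp only [uY, cc]
    norm_num
    simp only [constraintPolyY]
    simp only [map_add, map_one, Polynomial.aeval_X, Polynomial.aeval_C, Complex.coe_algebraMap]
    push_cast
    ring
  · simp only [uY]
    norm_num
    rw [show constraintPolyY N ε α (k'+2)
        = (X + C ((((k' : ℝ) + 2) * α) - ((k' : ℝ) + 2) * (((k' : ℝ) + 2) + 2 * ε))) *
            constraintPolyY N ε α (k' + 1) -
          C (((k' : ℝ) + 2) * ((k' : ℝ) + 1) * ((N : ℝ) - ((k' : ℝ) + 1)) * α) *
            constraintPolyY N ε α k' from rfl]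
    simp only [map_sub, map_mul, map_add, Polynomial.aeval_X, Polynomial.aeval_C, Complex.coe_algebraMap, cc]
    push_cast
    ring

lemma uX_rel (N : ℕ) (ε β : ℝ) (z : ℂ) (k : ℕ) :
    z * ((((k+1:ℕ):ℝ) : ℂ) * uX N ε β z (k+1) - ((cc N (k+1) : ℝ) : ℂ) * uX N ε β z k)
      = ((((k+1:ℕ):ℝ) * (((k+1:ℕ):ℝ) + 2*ε) : ℝ) : ℂ) * uX N ε β z (k+1) + uX N ε β z (k+2)
        - (β : ℂ) * uX N ε β z (k+1) := by
  rcases k with _ | k'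
  · simp only [uX, cc]
    norm_num
    simp only [constraintPolyX]
    simp only [map_add, map_one, map_mul, Polynomial.aeval_X, Polynomial.aeval_C, Complex.coe_algebraMap]
    push_cast
    ring
  · simp only [uX]
    norm_num
    rw [show constraintPolyX N ε β (k'+2)
        = (C ((k' : ℝ) + 2) * X + C (β - ((k' : ℝ) + 2) * (((k' : ℝ) + 2) + 2 * ε))) *
            constraintPolyX N ε β (k' + 1) -
          C (((k' : ℝ) + 2) * ((k' : ℝ) + 1) * ((N : ℝ) - ((k' : ℝ) + 1))) * X *
            constraintPolyX N ε β (k' + 1 - 1) from rfl]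
    simp only [map_sub, map_mul, map_add, Polynomial.aeval_X, Polynomial.aeval_C, Complex.coe_algebraMap, cc]
    push_cast
    ring

end CPaux

/-- for `ε > -1/2`, all complex roots of `y ↦ P_N^{(N,ε)}(α, y)` are real for
every real `α`, and all complex roots of `x ↦ P_N^{(N,ε)}(x, β)` are real for every real `β`. -/
theorem constraintPoly_all_roots_real (N : ℕ) (ε : ℝ) (hε : (-1 : ℝ) / 2 < ε) :
    (∀ α : ℝ, ∀ z : ℂ,
      (Polynomial.aeval z) (constraintPolyY N ε α N) = 0 → ∃ r : ℝ, z = (r : ℂ)) ∧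
    (∀ β : ℝ, ∀ z : ℂ,
      (Polynomial.aeval z) (constraintPolyX N ε β N) = 0 → ∃ r : ℝ, z = (r : ℂ)) := by
  constructor
  · intro α z hroot
    rcases N with _ | n
    · exfalso
      simp [constraintPolyY] at hroot
    · set M := n + 1 with hM
      set u := CPaux.uY M ε α z with hu
      have hu0 : u 0 = 0 := rfl
      have hu1 : u 1 = 1 := by
        simp [hu, CPaux.uY, constraintPolyY]
      have huN1 : u (M+1) = 0 := by
        simp only [hu, CPaux.uY, Nat.add_sub_cancel]
        simpa using hroot
      have him : z.im = 0 := by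
        refine CPaux.key_real n ε hε z (CPaux.wseq M u) (fun _ => 1) (fun m => (m : ℝ) * α) rfl
          (fun _ => zero_le_one) (CPaux.wseq_zero M u) (by rw [CPaux.wseq_one M (by omega) u, hu1])
          (CPaux.wseq_top M u) ?_
        intro m hm1 hmN
        have hA := CPaux.sum_A M ε u m hm1 hmN huN1
        have hK := CPaux.sum_K M u m hm1 hmN hu0
        have step1 : z * ((1:ℝ) : ℂ) * CPaux.wseq M u m
            = ∑ i ∈ Finset.range M, (CPaux.WW M m (i+1) : ℂ) * (z * u (i+1)) := by
          rw [CPaux.wseq, Finset.mul_sum]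
          exact Finset.sum_congr rfl fun i _ => by push_cast; ring
        rw [step1]
        have step2 : ∑ i ∈ Finset.range M, (CPaux.WW M m (i+1) : ℂ) * (z * u (i+1))
            = (∑ i ∈ Finset.range M, (CPaux.WW M m (i+1) : ℂ) *
                ((((i+1:ℕ):ℝ) * (((i+1:ℕ):ℝ) + 2*ε) : ℝ) * u (i+1) + u (i+2)))
              - (α : ℂ) * ∑ i ∈ Finset.range M, (CPaux.WW M m (i+1) : ℂ) *
                ((((i+1:ℕ):ℝ) : ℂ) * u (i+1) - ((CPaux.cc M (i+1) : ℝ) : ℂ) * u i) := by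
          rw [Finset.mul_sum, ← Finset.sum_sub_distrib]
          refine Finset.sum_congr rfl fun i _ => ?_
          rw [CPaux.uY_rel M ε α z i]
          push_cast
          ring
        rw [step2, hA, hK]
        push_cast
        ring
      exact ⟨z.re, Complex.ext (by simp) (by simp [him])⟩
  · intro β z hroot
    rcases N with _ | n
    · exfalso
      simp [constraintPolyX] at hroot
    · set M := n + 1 with hM
      set u := CPaux.uX M ε β z with hu
      have hu0 : u 0 = 0 := rfl
      have hu1 : u 1 = 1 := by
        simp [hu, CPaux.uX, constraintPolyX]
      have huN1 : u (M+1) = 0 := by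
        simp only [hu, CPaux.uX, Nat.add_sub_cancel]
        simpa using hroot
      have him : z.im = 0 := by
        refine CPaux.key_real n ε hε z (CPaux.wseq M u) (fun m => (m : ℝ)) (fun _ => β) (by norm_num)
          (fun m => by positivity) (CPaux.wseq_zero M u) (by rw [CPaux.wseq_one M (by omega) u, hu1])
          (CPaux.wseq_top M u) ?_
        intro m hm1 hmN
        have hA := CPaux.sum_A M ε u m hm1 hmN huN1
        have hK := CPaux.sum_K M u m hm1 hmN hu0
        have step1 : z * (((m:ℕ):ℝ) : ℂ) * CPaux.wseq M u m
            = ∑ i ∈ Finset.range M, (CPaux.WW M m (i+1) : ℂ) *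
                (z * ((((i+1:ℕ):ℝ) : ℂ) * u (i+1) - ((CPaux.cc M (i+1) : ℝ) : ℂ) * u i)) := by
          calc z * (((m:ℕ):ℝ) : ℂ) * CPaux.wseq M u m
              = z * ((((m:ℕ):ℝ) : ℂ) * CPaux.wseq M u m) := by ring
            _ = z * ∑ i ∈ Finset.range M, (CPaux.WW M m (i+1) : ℂ) *
                  ((((i+1:ℕ):ℝ) : ℂ) * u (i+1) - ((CPaux.cc M (i+1) : ℝ) : ℂ) * u i) := by rw [hK]
            _ = _ := by
                rw [Finset.mul_sum]
                exact Finset.sum_congr rfl fun i _ => by push_cast; ring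
        rw [step1]
        have step2 : ∑ i ∈ Finset.range M, (CPaux.WW M m (i+1) : ℂ) *
              (z * ((((i+1:ℕ):ℝ) : ℂ) * u (i+1) - ((CPaux.cc M (i+1) : ℝ) : ℂ) * u i))
            = (∑ i ∈ Finset.range M, (CPaux.WW M m (i+1) : ℂ) *
                ((((i+1:ℕ):ℝ) * (((i+1:ℕ):ℝ) + 2*ε) : ℝ) * u (i+1) + u (i+2)))
              - (β : ℂ) * ∑ i ∈ Finset.range M, (CPaux.WW M m (i+1) : ℂ) * u (i+1) := by
          rw [Finset.mul_sum, ← Finset.sum_sub_distrib]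
          refine Finset.sum_congr rfl fun i _ => ?_
          rw [CPaux.uX_rel M ε β z i]
          push_cast
          ring
        rw [step2, hA]
        rw [show ∑ i ∈ Finset.range M, (CPaux.WW M m (i+1) : ℂ) * u (i+1) = CPaux.wseq M u m from rfl]
        push_cast
        ring
      exact ⟨z.re, Complex.ext (by simp) (by simp [him])⟩
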